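/- If the mixed strategy profile x = (x^1,…,x^n) is a Nash equilibrium, then there exist reals ū^i, u^i_s, r^i_s, g^i_s and b^i_s ∈ {0,1} (for all players i and s ∈ S_i) satisfying the MIMLP3 constraints — u^i_s = u_i(s, x), ū^i ≥ u^i_s, r^i_s = ū^i − u^i_s, r^i_s ≥ 0, r^i_s ≤ U^i b^i_s, g^i_s ≥ x^i(s), g^i_s ≥ 1 − b^i_s — whose objective value ∑_{i=1}^n ∑_{s∈S_i} (g^i_s − (1 − b^i_s)) equals 0. -/

import Mathlib

/-!
Take `ū^i = U_i(x)`, `u^i_s = u_i(s, x)`, `b^i_s = 1` exactly off the support of `x^i` and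
`g^i_s = 1 - b^i_s`. At a Nash equilibrium no pure strategy beats `U_i(x)`, and since `U_i(x)`
is the `x^i`-average of the `u_i(s, x)`, every strategy in the support earns exactly `U_i(x)`:
there `r^i_s = 0`. Off the support `r^i_s ≤ U^i`, because every expected payoff, of a mixed or
a pure strategy, is an average of payoffs of player `i`.
-/

open Finset

/-- Expected payoff `U_i(x)` of player `i` under the mixed strategy profile `x`. -/
def expPayoff {n : ℕ} {S : Fin n → Type} [∀ i, Fintype (S i)]
    (A : Fin n → (∀ j, S j) → ℝ) (x : ∀ i, S i → ℝ) (i : Fin n) : ℝ :=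
  ∑ t : ∀ j, S j, A i t * ∏ j, x j (t j)

/-- Expected payoff `u_i(s, x)` of player `i` playing the pure strategy `s` while the
other players play their mixed strategies from `x`: summing over full pure profiles `t`
with `t i = s` is the same as summing over tuples `ŝ` of pure strategies of the others. -/
def purePayoff {n : ℕ} {S : Fin n → Type} [∀ i, Fintype (S i)] [∀ i, DecidableEq (S i)]
    (A : Fin n → (∀ j, S j) → ℝ) (x : ∀ i, S i → ℝ) (i : Fin n) (s : S i) : ℝ :=
  ∑ t : ∀ j, S j, if t i = s then A i t * ∏ j ∈ Finset.univ.erase i, x j (t j) else 0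

/-- `U^i`: the maximum difference of any two payoffs of player `i`. -/
noncomputable def payoffRange {n : ℕ} {S : Fin n → Type} [∀ i, Fintype (S i)]
    [∀ i, Nonempty (S i)] (A : Fin n → (∀ j, S j) → ℝ) (i : Fin n) : ℝ :=
  Finset.univ.sup' Finset.univ_nonempty (A i) - Finset.univ.inf' Finset.univ_nonempty (A i)


section WeightedAverage

variable {ι : Type*} [Fintype ι] [Nonempty ι] {w : ι → ℝ}

lemma sum_mul_le_sup'_of_mem_stdSimplex (hw : w ∈ stdSimplex ℝ ι) (f : ι → ℝ) :
    ∑ t, f t * w t ≤ univ.sup' univ_nonempty f :=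
  calc ∑ t, f t * w t ≤ ∑ t, univ.sup' univ_nonempty f * w t :=
        sum_le_sum fun t _ => mul_le_mul_of_nonneg_right (le_sup' f (mem_univ t)) (hw.1 t)
    _ = univ.sup' univ_nonempty f := by rw [← mul_sum, hw.2, mul_one]

lemma inf'_le_sum_mul_of_mem_stdSimplex (hw : w ∈ stdSimplex ℝ ι) (f : ι → ℝ) :
    univ.inf' univ_nonempty f ≤ ∑ t, f t * w t :=
  calc univ.inf' univ_nonempty f = ∑ t, univ.inf' univ_nonempty f * w t := by
        rw [← mul_sum, hw.2, mul_one]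
    _ ≤ ∑ t, f t * w t :=
        sum_le_sum fun t _ => mul_le_mul_of_nonneg_right (inf'_le f (mem_univ t)) (hw.1 t)

end WeightedAverage

lemma eq_of_sum_mul_eq_of_le {ι : Type*} [Fintype ι] {w f : ι → ℝ} {c : ℝ}
    (hw : w ∈ stdSimplex ℝ ι) (hf : ∀ s, f s ≤ c) (hsum : ∑ s, w s * f s = c)
    {s : ι} (hs : w s ≠ 0) : f s = c := by
  have hgap : ∑ a, w a * (c - f a) = 0 := by
    simp only [mul_sub, sum_sub_distrib, ← sum_mul, hw.2, one_mul, hsum, sub_self]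
  have hgap_s := (sum_eq_zero_iff_of_nonneg fun a _ =>
    mul_nonneg (hw.1 a) (sub_nonneg.2 (hf a))).1 hgap s (mem_univ s)
  linarith [(mul_eq_zero.1 hgap_s).resolve_left hs]

section Payoffs

variable {n : ℕ} {S : Fin n → Type} [∀ i, Fintype (S i)]
  (A : Fin n → (∀ j, S j) → ℝ) {x : ∀ i, S i → ℝ}

lemma prod_mem_stdSimplex (hx : ∀ i, x i ∈ stdSimplex ℝ (S i)) :
    (fun t : ∀ j, S j => ∏ j, x j (t j)) ∈ stdSimplex ℝ (∀ j, S j) :=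
  ⟨fun t => prod_nonneg fun j _ => (hx j).1 (t j), by
    rw [← Fintype.prod_sum]; exact prod_eq_one fun j _ => (hx j).2⟩

section

variable [∀ i, Nonempty (S i)]

lemma expPayoff_mem_Icc (hx : ∀ i, x i ∈ stdSimplex ℝ (S i)) (i : Fin n) :
    expPayoff A x i ∈ Set.Icc (univ.inf' univ_nonempty (A i)) (univ.sup' univ_nonempty (A i)) :=
  ⟨inf'_le_sum_mul_of_mem_stdSimplex (prod_mem_stdSimplex hx) (A i),
    sum_mul_le_sup'_of_mem_stdSimplex (prod_mem_stdSimplex hx) (A i)⟩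

end

variable [∀ i, DecidableEq (S i)]

lemma expPayoff_update_self (x : ∀ i, S i → ℝ) (i : Fin n) (y : S i → ℝ) :
    expPayoff A (Function.update x i y) i = ∑ s, y s * purePayoff A x i s := by
  have hprod : ∀ t : ∀ j, S j,
      ∏ j, Function.update x i y j (t j) = y (t i) * ∏ j ∈ univ.erase i, x j (t j) := by
    intro t
    rw [← mul_prod_erase univ _ (mem_univ i), Function.update_self]
    exact congrArg _ <| prod_congr rfl fun j hj => by
      rw [Function.update_of_ne (ne_of_mem_erase hj)]
  simp only [expPayoff, purePayoff, hprod, mul_sum, mul_ite, mul_zero]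
  rw [sum_comm]
  refine sum_congr rfl fun t _ => ?_
  simp only [eq_comm (a := t i), sum_ite_eq', mem_univ, if_true]
  ring

lemma expPayoff_eq_sum_mul_purePayoff (x : ∀ i, S i → ℝ) (i : Fin n) :
    expPayoff A x i = ∑ s, x i s * purePayoff A x i s := by
  simpa only [Function.update_eq_self] using expPayoff_update_self A x i (x i)

lemma purePayoff_eq_expPayoff_update_single (x : ∀ i, S i → ℝ) (i : Fin n) (s : S i) :
    purePayoff A x i s = expPayoff A (Function.update x i (Pi.single s 1)) i := by
  rw [expPayoff_update_self]
  simp [Pi.single_apply]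

variable [∀ i, Nonempty (S i)]

lemma purePayoff_mem_Icc (hx : ∀ i, x i ∈ stdSimplex ℝ (S i)) (i : Fin n) (s : S i) :
    purePayoff A x i s ∈
      Set.Icc (univ.inf' univ_nonempty (A i)) (univ.sup' univ_nonempty (A i)) := by
  rw [purePayoff_eq_expPayoff_update_single]
  refine expPayoff_mem_Icc A (fun j => ?_) i
  rcases eq_or_ne j i with rfl | hj
  · simpa only [Function.update_self] using single_mem_stdSimplex ℝ s
  · simpa only [Function.update_of_ne hj] using hx j

end Payoffs

section Nash

variable {n : ℕ} {S : Fin n → Type} [∀ i, Fintype (S i)] [∀ i, DecidableEq (S i)]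
  {A : Fin n → (∀ j, S j) → ℝ} {x : ∀ i, S i → ℝ}

lemma purePayoff_le_expPayoff_of_nash
    (hNash : ∀ (i : Fin n) (y : S i → ℝ), (∀ s, 0 ≤ y s) → ∑ s, y s = 1 →
      expPayoff A (Function.update x i y) i ≤ expPayoff A x i) (i : Fin n) (s : S i) :
    purePayoff A x i s ≤ expPayoff A x i := by
  rw [purePayoff_eq_expPayoff_update_single]
  exact hNash i _ (single_mem_stdSimplex ℝ s).1 (single_mem_stdSimplex ℝ s).2

lemma purePayoff_eq_expPayoff_of_ne_zero {i : Fin n} (hx : x i ∈ stdSimplex ℝ (S i))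
    (hbest : ∀ s, purePayoff A x i s ≤ expPayoff A x i) {s : S i} (hs : x i s ≠ 0) :
    purePayoff A x i s = expPayoff A x i :=
  eq_of_sum_mul_eq_of_le hx hbest (expPayoff_eq_sum_mul_purePayoff A x i).symm hs

end Nash

theorem nash_gives_mimlp3_optimal_general
    (n : ℕ) (S : Fin n → Type)
    [∀ i, Fintype (S i)] [∀ i, Nonempty (S i)] [∀ i, DecidableEq (S i)]
    (A : Fin n → (∀ j, S j) → ℝ)
    (x : ∀ i, S i → ℝ)
    (hx0 : ∀ i s, 0 ≤ x i s) (hx1 : ∀ i, ∑ s, x i s = 1)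
    (hNash : ∀ (i : Fin n) (y : S i → ℝ), (∀ s, 0 ≤ y s) → ∑ s, y s = 1 →
      expPayoff A (Function.update x i y) i ≤ expPayoff A x i)
    :
    ∃ (ubar : Fin n → ℝ) (u r g b : ∀ i, S i → ℝ),
      (∀ (i : Fin n) (s : S i),
        (b i s = 0 ∨ b i s = 1) ∧
        u i s = purePayoff A x i s ∧
        u i s ≤ ubar i ∧
        r i s = ubar i - u i s ∧
        0 ≤ r i s ∧
        r i s ≤ payoffRange A i * b i s ∧
        x i s ≤ g i s ∧
        1 - b i s ≤ g i s) ∧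
      ∑ i, ∑ s, (g i s - (1 - b i s)) = 0 := by
  have hx : ∀ i, x i ∈ stdSimplex ℝ (S i) := fun i => ⟨hx0 i, hx1 i⟩
  have hbest := purePayoff_le_expPayoff_of_nash hNash
  refine ⟨fun i => expPayoff A x i, purePayoff A x,
    fun i s => expPayoff A x i - purePayoff A x i s,
    fun i s => if x i s = 0 then 0 else 1, fun i s => if x i s = 0 then 1 else 0, fun i s => ?_,
    sum_eq_zero fun i _ => sum_eq_zero fun s _ => by dsimp only; split_ifs <;> norm_num⟩
  dsimp only
  refine ⟨by split_ifs <;> simp, rfl, hbest i s, rfl, sub_nonneg.2 (hbest i s), ?_⟩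
  split_ifs with hs
  · have hu := purePayoff_mem_Icc A hx i s
    have hU := expPayoff_mem_Icc A hx i
    refine ⟨?_, hs.le, by norm_num⟩
    rw [payoffRange, mul_one]
    linarith [hu.1, hU.2]
  · rw [purePayoff_eq_expPayoff_of_ne_zero (hx i) (hbest i) hs, mul_zero, sub_self]
    exact ⟨le_rfl, (mem_Icc_of_mem_stdSimplex (hx i) s).2, by norm_num⟩

/-- If the mixed strategy profile `x` is a Nash equilibrium, then there
exist `ū^i`, `u^i_s`, `r^i_s`, `g^i_s` and binary `b^i_s` satisfying the MIMLP3 constraints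
whose objective value `∑ᵢ ∑_{s ∈ S_i} (g^i_s − (1 − b^i_s))` equals `0`. -/
theorem nash_gives_mimlp3_optimal
    (n : ℕ) (hn : 2 ≤ n) (S : Fin n → Type)
    [∀ i, Fintype (S i)] [∀ i, Nonempty (S i)] [∀ i, DecidableEq (S i)]
    (A : Fin n → (∀ j, S j) → ℝ)
    (x : ∀ i, S i → ℝ)
    (hx0 : ∀ i s, 0 ≤ x i s) (hx1 : ∀ i, ∑ s, x i s = 1)
    (hNash : ∀ (i : Fin n) (y : S i → ℝ), (∀ s, 0 ≤ y s) → ∑ s, y s = 1 →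
      expPayoff A (Function.update x i y) i ≤ expPayoff A x i)
    :
    ∃ (ubar : Fin n → ℝ) (u r g b : ∀ i, S i → ℝ),
      (∀ (i : Fin n) (s : S i),
        (b i s = 0 ∨ b i s = 1) ∧
        u i s = purePayoff A x i s ∧
        u i s ≤ ubar i ∧
        r i s = ubar i - u i s ∧
        0 ≤ r i s ∧
        r i s ≤ payoffRange A i * b i s ∧
        x i s ≤ g i s ∧
        1 - b i s ≤ g i s) ∧
      ∑ i, ∑ s, (g i s - (1 - b i s)) = 0 :=
  nash_gives_mimlp3_optimal_general n S A x hx0 hx1 hNash
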